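/- Let H(ℓ, r) be the disjoint union of two cliques of sizes ℓ and r with unit edge weights. The minimum hierarchical clustering cost of H(ℓ, r) is C(ℓ, r) = (ℓ³ − ℓ)/3 + (r³ − r)/3, achieved by first splitting into the two cliques. -/

import Mathlib

open Finset

/-- A rooted binary tree whose leaves are labeled by elements of `Fin n`. -/
inductive HTree (n : ℕ) : Type where
  | leaf : Fin n → HTree n
  | node : HTree n → HTree n → HTree n

namespace HTree

variable {n : ℕ}

/-- The list of leaf labels, left to right. -/
def leafList : HTree n → List (Fin n)
  | .leaf v => [v]
  | .node l r => l.leafList ++ r.leafList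

/-- The set of leaf labels of a tree. -/
def leaves (T : HTree n) : Finset (Fin n) := T.leafList.toFinset

/-- `T` is a hierarchical clustering tree of the whole vertex set `Fin n`:
its leaves are in one-to-one correspondence with `Fin n`. -/
def IsFullTree (T : HTree n) : Prop := T.leafList.Nodup ∧ T.leaves = Finset.univ

/-- `|leaves(T[i ∨ j])|`: the number of leaves of the subtree rooted at the
lowest common ancestor of leaves `i` and `j`. -/
def lcaSize : HTree n → Fin n → Fin n → ℕ
  | .leaf _, _, _ => 1
  | .node l r, i, j =>
    if i ∈ l.leaves ∧ j ∈ l.leaves then l.lcaSize i j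
    else if i ∈ r.leaves ∧ j ∈ r.leaves then r.lcaSize i j
    else (l.leaves ∪ r.leaves).card

/-- `cost_G(T) = Σ_{{i,j}} w_{ij} |leaves(T[i ∨ j])|`, the sum being over
unordered pairs (represented as ordered pairs `p.1 < p.2`). -/
def pairCost (w : Fin n → Fin n → ℝ) (T : HTree n) : ℝ :=
  ∑ p ∈ Finset.univ.filter (fun p : Fin n × Fin n => p.1 < p.2),
    w p.1 p.2 * (T.lcaSize p.1 p.2 : ℝ)

/-- `w(A, B)`: total weight of edges between `A` and `B`. -/
def cut (w : Fin n → Fin n → ℝ) (A B : Finset (Fin n)) : ℝ :=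
  ∑ i ∈ A, ∑ j ∈ B, w i j

/-- The sum-of-splits formulation of the cost:
`Σ over internal splits S → (S₁,S₂) of |S| ⬝ w(S₁,S₂)`. -/
def splitCost (w : Fin n → Fin n → ℝ) : HTree n → ℝ
  | .leaf _ => 0
  | .node l r =>
      ((l.leaves ∪ r.leaves).card : ℝ) * cut w l.leaves r.leaves
        + splitCost w l + splitCost w r

/-- `Subtree t T`: `t` occurs as a subtree of `T`. -/
inductive Subtree : HTree n → HTree n → Prop
  | refl (t : HTree n) : Subtree t t
  | left {t l r : HTree n} : Subtree t l → Subtree t (.node l r)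
  | right {t l r : HTree n} : Subtree t r → Subtree t (.node l r)

end HTree

/-!
For a tree `t` and a set `S` of its leaves let `t.lcaSum S` be the sum of `|leaves(t[i ∨ j])|`
over the pairs `i < j` of `S`; the cost of `H(ℓ, r)` is `lcaSum A + lcaSum B` for its two
cliques `A` and `B`. At a node with children `l` and `r`, the pairs of `S` are those inside `l`,
those inside `r`, and `|S ∩ l| · |S ∩ r|` crossing pairs, each charged the size of the node,
which is at least `|S ∩ l| + |S ∩ r|`. Since `c(k) = (k³ - k)/3` satisfies
`c(a + b) = c(a) + c(b) + ab(a + b)`, induction gives `c(|S|) ≤ t.lcaSum S`, with equality when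
`S` is the whole leaf set. So every tree costs at least `c(ℓ) + c(r)`, and a tree whose root
separates `A` from `B` costs exactly that.
-/

theorem Nat.add_choose_two (a b : ℕ) : (a + b).choose 2 = a.choose 2 + b.choose 2 + a * b := by
  simp [Nat.add_choose_eq, Finset.Nat.antidiagonal_succ]
  ring

section LtPairs

variable {α : Type*} [LinearOrder α] {S T : Finset α}

def ltPairs (S : Finset α) : Finset (α × α) := {p ∈ S ×ˢ S | p.1 < p.2}

theorem mem_ltPairs {p : α × α} : p ∈ ltPairs S ↔ p.1 ∈ S ∧ p.2 ∈ S ∧ p.1 < p.2 := by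
  simp [ltPairs, and_assoc]

theorem ltPairs_mono (h : S ⊆ T) : ltPairs S ⊆ ltPairs T :=
  filter_subset_filter _ (product_subset_product h h)

theorem disjoint_ltPairs (h : Disjoint S T) : Disjoint (ltPairs S) (ltPairs T) :=
  disjoint_filter_filter (disjoint_product.mpr (Or.inl h))

theorem card_ltPairs (S : Finset α) : #(ltPairs S) = (#S).choose 2 :=
  card_product_filter_lt

theorem card_ltPairs_union_sdiff (h : Disjoint S T) :
    #(ltPairs (S ∪ T) \ (ltPairs S ∪ ltPairs T)) = #S * #T := by
  have hsub : ltPairs S ∪ ltPairs T ⊆ ltPairs (S ∪ T) :=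
    union_subset (ltPairs_mono subset_union_left) (ltPairs_mono subset_union_right)
  have := card_sdiff_add_card_eq_card hsub
  rw [card_union_of_disjoint (disjoint_ltPairs h), card_ltPairs, card_ltPairs, card_ltPairs,
    card_union_of_disjoint h, Nat.add_choose_two] at this
  omega

end LtPairs

noncomputable def cliqueCost (k : ℕ) : ℝ := ((k : ℝ) ^ 3 - k) / 3

theorem cliqueCost_add (a b : ℕ) :
    cliqueCost (a + b) = cliqueCost a + cliqueCost b + a * b * (a + b) := by
  simp only [cliqueCost]; push_cast; ring

namespace HTree

variable {n : ℕ}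

@[simp]
theorem leaves_leaf (v : Fin n) : (leaf v).leaves = {v} := by
  simp [leaves, leafList]

theorem leaves_node (l r : HTree n) : (node l r).leaves = l.leaves ∪ r.leaves := by
  simp [leaves, leafList]

theorem leafList_nodup_node_iff {l r : HTree n} :
    (node l r).leafList.Nodup ↔
      l.leafList.Nodup ∧ r.leafList.Nodup ∧ Disjoint l.leaves r.leaves := by
  simp only [leafList, List.nodup_append, leaves, List.disjoint_toFinset_iff_disjoint]
  grind [List.Disjoint]

theorem exists_leafList_nodup_leaves_eq {S : Finset (Fin n)} (hS : S.Nonempty) :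
    ∃ t : HTree n, t.leafList.Nodup ∧ t.leaves = S := by
  induction hS using Finset.Nonempty.cons_induction with
  | singleton v => exact ⟨leaf v, by simp [leafList], leaves_leaf v⟩
  | cons v S hv _ ih =>
    obtain ⟨t, ht, rfl⟩ := ih
    refine ⟨node (leaf v) t, leafList_nodup_node_iff.mpr ⟨by simp [leafList], ht, by simpa⟩, ?_⟩
    rw [leaves_node, leaves_leaf, cons_eq_insert, insert_eq]

theorem IsFullTree.leaves_right_eq_compl {l r : HTree n} (h : (node l r).IsFullTree) :
    r.leaves = l.leavesᶜ := by
  rw [eq_compl_iff_isCompl]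
  refine ⟨(leafList_nodup_node_iff.mp h.1).2.2.symm, codisjoint_iff.mpr ?_⟩
  rw [sup_comm, sup_eq_union, ← leaves_node, h.2, top_eq_univ]

def lcaSum (t : HTree n) (S : Finset (Fin n)) : ℝ :=
  ∑ p ∈ ltPairs S, (t.lcaSize p.1 p.2 : ℝ)

theorem lcaSum_node_left {l r : HTree n} {S : Finset (Fin n)} (hS : S ⊆ l.leaves) :
    (node l r).lcaSum S = l.lcaSum S := by
  refine sum_congr rfl fun p hp => ?_
  obtain ⟨h1, h2, -⟩ := mem_ltPairs.mp hp
  rw [lcaSize, if_pos ⟨hS h1, hS h2⟩]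

theorem lcaSum_node_right {l r : HTree n} (hd : Disjoint l.leaves r.leaves) {S : Finset (Fin n)}
    (hS : S ⊆ r.leaves) : (node l r).lcaSum S = r.lcaSum S := by
  refine sum_congr rfl fun p hp => ?_
  obtain ⟨h1, h2, -⟩ := mem_ltPairs.mp hp
  rw [lcaSize, if_neg fun h => disjoint_left.mp hd h.1 (hS h1), if_pos ⟨hS h1, hS h2⟩]

theorem lcaSum_node {l r : HTree n} (hd : Disjoint l.leaves r.leaves) {U V : Finset (Fin n)}
    (hU : U ⊆ l.leaves) (hV : V ⊆ r.leaves) :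
    (node l r).lcaSum (U ∪ V) =
      l.lcaSum U + r.lcaSum V + #U * #V * #(node l r).leaves := by
  have hUV : Disjoint U V := hd.mono hU hV
  have hsub : ltPairs U ∪ ltPairs V ⊆ ltPairs (U ∪ V) :=
    union_subset (ltPairs_mono subset_union_left) (ltPairs_mono subset_union_right)
  have hcross : ∀ p ∈ ltPairs (U ∪ V) \ (ltPairs U ∪ ltPairs V),
      ((node l r).lcaSize p.1 p.2 : ℝ) = #(node l r).leaves := by
    intro p hp
    simp only [mem_sdiff, mem_union, mem_ltPairs] at hp
    rw [lcaSize, if_neg, if_neg, leaves_node] <;> grind [disjoint_left]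
  rw [lcaSum, ← sum_sdiff hsub, sum_congr rfl hcross, sum_const, card_ltPairs_union_sdiff hUV,
    sum_union (disjoint_ltPairs hUV), ← lcaSum, ← lcaSum, lcaSum_node_left hU,
    lcaSum_node_right hd hV, nsmul_eq_mul]
  push_cast
  ring

theorem lcaSum_leaves {t : HTree n} (ht : t.leafList.Nodup) :
    t.lcaSum t.leaves = cliqueCost #t.leaves := by
  induction t with
  | leaf v => simp [lcaSum, ltPairs, cliqueCost, filter_singleton]
  | node l r ihl ihr =>
    obtain ⟨hl, hr, hd⟩ := leafList_nodup_node_iff.mp ht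
    rw [leaves_node, lcaSum_node hd subset_rfl subset_rfl, ihl hl, ihr hr, leaves_node,
      card_union_of_disjoint hd, cliqueCost_add]
    push_cast
    ring

theorem cliqueCost_card_le_lcaSum {t : HTree n} (ht : t.leafList.Nodup) {S : Finset (Fin n)}
    (hS : S ⊆ t.leaves) : cliqueCost #S ≤ t.lcaSum S := by
  induction t generalizing S with
  | leaf v =>
    rcases subset_singleton_iff.mp hS with rfl | rfl <;>
      simp [lcaSum, ltPairs, cliqueCost, filter_singleton]
  | node l r ihl ihr =>
    obtain ⟨hl, hr, hd⟩ := leafList_nodup_node_iff.mp ht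
    have hsplit : S = S ∩ l.leaves ∪ S ∩ r.leaves := by
      rw [← inter_union_distrib_left, ← leaves_node, inter_eq_left.mpr hS]
    have hdS : Disjoint (S ∩ l.leaves) (S ∩ r.leaves) :=
      hd.mono inter_subset_right inter_subset_right
    have hcard : (#(S ∩ l.leaves) + #(S ∩ r.leaves) : ℝ) ≤ #(node l r).leaves := by
      rw [← Nat.cast_add, ← card_union_of_disjoint hdS, ← hsplit]
      exact_mod_cast card_le_card hS
    rw [hsplit, lcaSum_node hd inter_subset_right inter_subset_right, card_union_of_disjoint hdS,
      cliqueCost_add]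
    exact add_le_add (add_le_add (ihl hl inter_subset_right) (ihr hr inter_subset_right))
      (mul_le_mul_of_nonneg_left hcard (mul_nonneg (Nat.cast_nonneg _) (Nat.cast_nonneg _)))

theorem pairCost_sameBlock (T : HTree n) {A B : Finset (Fin n)} (hAB : Disjoint A B) :
    T.pairCost (fun i j => if i ≠ j ∧ (i ∈ A ∧ j ∈ A ∨ i ∈ B ∧ j ∈ B) then 1 else 0) =
      T.lcaSum A + T.lcaSum B := by
  rw [lcaSum, lcaSum, ← sum_union (disjoint_ltPairs hAB), pairCost]
  simp_rw [ite_mul, one_mul, zero_mul]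
  rw [← sum_filter]
  congr 1
  ext p
  simp only [mem_filter, mem_univ, true_and, mem_union, mem_ltPairs]
  grind

end HTree

open HTree in
/-- `H(ℓ,r)`, the disjoint union of two unit-weight cliques of sizes `ℓ` and `r`
(on vertex set `Fin (ℓ+r)`, the first clique being `{i : i < ℓ}`), has minimum
hierarchical clustering cost `C(ℓ,r) = (ℓ³-ℓ)/3 + (r³-r)/3`; this is achieved
exactly by any tree whose top split separates the two cliques. -/
theorem two_cliques_optimal_cost (ℓ r : ℕ) (hl : 0 < ℓ) (hr : 0 < r) :
    (∀ T : HTree (ℓ + r), T.IsFullTree →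
        (((ℓ : ℝ) ^ 3 - ℓ) / 3 + ((r : ℝ) ^ 3 - r) / 3) ≤
          T.pairCost (fun i j =>
            if i ≠ j ∧ ((i.val < ℓ ∧ j.val < ℓ) ∨ (ℓ ≤ i.val ∧ ℓ ≤ j.val)) then 1 else 0)) ∧
    (∀ Tl Tr : HTree (ℓ + r), (HTree.node Tl Tr).IsFullTree →
        Tl.leaves = Finset.univ.filter (fun i : Fin (ℓ + r) => i.val < ℓ) →
        (HTree.node Tl Tr).pairCost (fun i j =>
            if i ≠ j ∧ ((i.val < ℓ ∧ j.val < ℓ) ∨ (ℓ ≤ i.val ∧ ℓ ≤ j.val)) then 1 else 0)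
          = ((ℓ : ℝ) ^ 3 - ℓ) / 3 + ((r : ℝ) ^ 3 - r) / 3) ∧
    (∃ Tl Tr : HTree (ℓ + r), (HTree.node Tl Tr).IsFullTree ∧
        Tl.leaves = Finset.univ.filter (fun i : Fin (ℓ + r) => i.val < ℓ)) := by
  set A : Finset (Fin (ℓ + r)) := univ.filter (fun i => i.val < ℓ)
  have hcardA : #A = ℓ := by simp [A, Fin.card_filter_val_lt]
  have hcardB : #Aᶜ = r := by simp [card_compl, hcardA]
  have hw : (fun i j : Fin (ℓ + r) =>
      if i ≠ j ∧ ((i.val < ℓ ∧ j.val < ℓ) ∨ (ℓ ≤ i.val ∧ ℓ ≤ j.val)) then (1 : ℝ) else 0) =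
      fun i j => if i ≠ j ∧ (i ∈ A ∧ j ∈ A ∨ i ∈ Aᶜ ∧ j ∈ Aᶜ) then 1 else 0 := by
    simp [A, not_lt]
  simp only [hw, pairCost_sameBlock _ disjoint_compl_right]
  refine ⟨fun T hT => ?_, fun Tl Tr hT hTl => ?_, ?_⟩
  · calc cliqueCost ℓ + cliqueCost r = cliqueCost #A + cliqueCost #Aᶜ := by rw [hcardA, hcardB]
      _ ≤ T.lcaSum A + T.lcaSum Aᶜ :=
        add_le_add (cliqueCost_card_le_lcaSum hT.1 (hT.2 ▸ subset_univ A))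
          (cliqueCost_card_le_lcaSum hT.1 (hT.2 ▸ subset_univ Aᶜ))
  · obtain ⟨hl, hr, hd⟩ := leafList_nodup_node_iff.mp hT.1
    have hTr : Tr.leaves = Aᶜ := hTl ▸ hT.leaves_right_eq_compl
    rw [← hTr, ← hTl, lcaSum_node_left subset_rfl, lcaSum_node_right hd subset_rfl,
      lcaSum_leaves hl, lcaSum_leaves hr, hTl, hTr, hcardA, hcardB]
    rfl
  · obtain ⟨Tl, hTl, hTlA⟩ :=
      exists_leafList_nodup_leaves_eq (S := A) ⟨⟨0, by omega⟩, by simpa [A]⟩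
    obtain ⟨Tr, hTr, hTrB⟩ :=
      exists_leafList_nodup_leaves_eq (S := Aᶜ) ⟨⟨ℓ, by omega⟩, by simp [A]⟩
    refine ⟨Tl, Tr, ⟨?_, ?_⟩, hTlA⟩
    · exact leafList_nodup_node_iff.mpr ⟨hTl, hTr, hTlA ▸ hTrB ▸ disjoint_compl_right⟩
    · rw [leaves_node, hTlA, hTrB, union_compl]
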